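/- arXiv:2101.05841 — 4 statements merged into one kernel-verified Lean document; each statement's English description precedes it below -/
import Mathlib

section
/- Let X = (X_1,...,X_d) have independent standard normal coordinates. Then the variance of ‖X‖ is at most 1, for every dimension d ≥ 1. -/
/-!
Write `R = ‖X‖` and `M q = ∫₀^∞ r ^ q e^{-r²/2} dr = 2^{(q-1)/2} Γ((q+1)/2)`
(`gaussianMomentIoi`). In polar coordinates every moment of `R` is a ratio of these:
`E[R ^ k] = M (d - 1 + k) / M (d - 1)`, the constant in front (involving the volume of the unit
ball) being fixed by the total mass `1`. The recursion
`M (q + 2) = (q + 1) M q` gives `E[R²] = d`, and log-convexity of `Γ` gives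
`M (q + 1)² ≤ M q * M (q + 2)`, hence `(E R)² ≥ d - 1` and `Var R = E[R²] - (E R)² ≤ 1`.
-/

open MeasureTheory ProbabilityTheory Real Set
open scoped ENNReal NNReal

lemma Gamma_add_half_sq_le {s : ℝ} (hs : 0 < s) :
    Gamma (s + 1 / 2) ^ 2 ≤ Gamma s * Gamma (s + 1) := by
  have h := Gamma_mul_add_mul_le_rpow_Gamma_mul_rpow_Gamma hs (by positivity : 0 < s + 1)
    one_half_pos one_half_pos (add_halves 1)
  rw [← sqrt_eq_rpow, ← sqrt_eq_rpow, show 1 / 2 * s + 1 / 2 * (s + 1) = s + 1 / 2 by ring] at h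
  calc Gamma (s + 1 / 2) ^ 2 ≤ (√(Gamma s) * √(Gamma (s + 1))) ^ 2 :=
        pow_le_pow_left₀ (Gamma_pos_of_pos (by positivity)).le h 2
    _ = Gamma s * Gamma (s + 1) := by
        rw [mul_pow, sq_sqrt (Gamma_pos_of_pos hs).le,
          sq_sqrt (Gamma_pos_of_pos (by positivity)).le]

noncomputable def gaussianMomentIoi (q : ℕ) : ℝ := ∫ r in Ioi 0, r ^ q * exp (-r ^ 2 / 2)

lemma gaussianMomentIoi_eq_Gamma (q : ℕ) :
    gaussianMomentIoi q = 2 ^ (((q : ℝ) - 1) / 2) * Gamma ((q + 1) / 2) := by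
  have hq : (-1 : ℝ) < q := by linarith [q.cast_nonneg (α := ℝ)]
  calc gaussianMomentIoi q = ∫ r in Ioi 0, r ^ (q : ℝ) * exp (-(1 / 2) * r ^ (2 : ℝ)) := by
        simp only [gaussianMomentIoi, rpow_natCast, rpow_ofNat]
        congr with r
        ring_nf
    _ = (1 / 2) ^ (-((q : ℝ) + 1) / 2) * (1 / 2) * Gamma ((q + 1) / 2) :=
        integral_rpow_mul_exp_neg_mul_rpow two_pos hq one_half_pos
    _ = _ := by
        rw [one_div, inv_rpow zero_le_two, ← rpow_neg zero_le_two, ← rpow_neg_one,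
          ← rpow_add two_pos]
        ring_nf

lemma gaussianMomentIoi_pos (q : ℕ) : 0 < gaussianMomentIoi q := by
  rw [gaussianMomentIoi_eq_Gamma]
  have := Gamma_pos_of_pos (by positivity : (0 : ℝ) < (q + 1) / 2)
  positivity

lemma gaussianMomentIoi_add_two (q : ℕ) :
    gaussianMomentIoi (q + 2) = (q + 1) * gaussianMomentIoi q := by
  have hs : ((q : ℝ) + 1) / 2 ≠ 0 := by positivity
  rw [gaussianMomentIoi_eq_Gamma, gaussianMomentIoi_eq_Gamma,
    show ((q + 2 : ℕ) + 1 : ℝ) / 2 = (q + 1) / 2 + 1 by push_cast; ring, Gamma_add_one hs,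
    show ((q + 2 : ℕ) - 1 : ℝ) / 2 = (q - 1) / 2 + 1 by push_cast; ring,
    rpow_add_one two_ne_zero]
  field_simp

lemma gaussianMomentIoi_sq_le (q : ℕ) :
    gaussianMomentIoi (q + 1) ^ 2 ≤ gaussianMomentIoi q * gaussianMomentIoi (q + 2) := by
  have h := Gamma_add_half_sq_le (by positivity : (0 : ℝ) < (q + 1) / 2)
  simp only [gaussianMomentIoi_eq_Gamma]
  push_cast
  calc (2 ^ (((q : ℝ) + 1 - 1) / 2) * Gamma ((q + 1 + 1) / 2)) ^ 2
        = 2 ^ (q : ℝ) * Gamma ((q + 1) / 2 + 1 / 2) ^ 2 := by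
          rw [mul_pow, ← rpow_mul_natCast zero_le_two]
          ring_nf
    _ ≤ 2 ^ (q : ℝ) * (Gamma ((q + 1) / 2) * Gamma ((q + 1) / 2 + 1)) := by gcongr
    _ = _ := by
          rw [mul_mul_mul_comm, ← rpow_add two_pos]
          ring_nf

lemma mul_gaussianMomentIoi_sq_le (q : ℕ) :
    q * gaussianMomentIoi q ^ 2 ≤ gaussianMomentIoi (q + 1) ^ 2 := by
  cases q with
  | zero => simpa using sq_nonneg _
  | succ q =>
    calc ((q + 1 : ℕ) : ℝ) * gaussianMomentIoi (q + 1) ^ 2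
        ≤ (q + 1) * (gaussianMomentIoi q * gaussianMomentIoi (q + 2)) := by
          push_cast
          gcongr
          exact gaussianMomentIoi_sq_le q
      _ = gaussianMomentIoi (q + 2) ^ 2 := by
          rw [gaussianMomentIoi_add_two]
          ring

section

variable {ι : Type*} [Fintype ι]

lemma pi_gaussianReal_eq_withDensity (m : ι → ℝ) (v : ι → ℝ≥0) (hv : ∀ i, v i ≠ 0) :
    Measure.pi (fun i ↦ gaussianReal (m i) (v i)) =
      volume.withDensity fun x ↦ ENNReal.ofReal (∏ i, gaussianPDFReal (m i) (v i) (x i)) := by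
  refine Measure.pi_eq fun s hs ↦ ?_
  have hint : Integrable (fun x : ι → ℝ ↦ ∏ i, gaussianPDFReal (m i) (v i) (x i)) :=
    Integrable.fintype_prod (f := fun i ↦ gaussianPDFReal (m i) (v i))
      fun i ↦ integrable_gaussianPDFReal _ _
  rw [withDensity_apply _ (.univ_pi hs), ← ofReal_integral_eq_lintegral_ofReal hint.restrict
    (ae_of_all _ fun x ↦ Finset.prod_nonneg fun i _ ↦ gaussianPDFReal_nonneg _ _ _),
    volume_pi, Measure.restrict_pi_pi, integral_fintype_prod_eq_prod,
    ENNReal.ofReal_prod_of_nonneg fun i _ ↦ setIntegral_nonneg (hs i)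
      fun x _ ↦ gaussianPDFReal_nonneg _ _ _]
  exact Finset.prod_congr rfl fun i _ ↦ (gaussianReal_apply_eq_integral _ (hv i) _).symm

lemma prod_gaussianPDFReal_zero_one (x : EuclideanSpace ℝ ι) :
    ∏ i, gaussianPDFReal 0 1 (x i) =
      (√(2 * π))⁻¹ ^ Fintype.card ι * exp (-‖x‖ ^ 2 / 2) := by
  simp [gaussianPDFReal, Finset.prod_mul_distrib, ← exp_sum, EuclideanSpace.real_norm_sq_eq,
    Finset.sum_div, neg_div]

lemma integral_stdGaussian_euclideanSpace (F : EuclideanSpace ℝ ι → ℝ) :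
    ∫ x, F x ∂stdGaussian (EuclideanSpace ℝ ι) =
      ∫ x, (√(2 * π))⁻¹ ^ Fintype.card ι * exp (-‖x‖ ^ 2 / 2) * F x := by
  have hρ : Measurable fun x : ι → ℝ ↦ ENNReal.ofReal (∏ i, gaussianPDFReal 0 1 (x i)) :=
    by fun_prop
  rw [← map_pi_eq_stdGaussian, ← MeasurableEquiv.coe_toLp, integral_map_equiv,
    pi_gaussianReal_eq_withDensity _ _ fun _ ↦ one_ne_zero,
    integral_withDensity_eq_integral_toReal_smul hρ (ae_of_all _ fun _ ↦ ENNReal.ofReal_lt_top),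
    ← (EuclideanSpace.volume_preserving_symm_measurableEquiv_toLp ι).symm.integral_comp']
  congr 1 with x
  rw [MeasurableEquiv.symm_symm, MeasurableEquiv.coe_toLp, smul_eq_mul,
    ENNReal.toReal_ofReal (Finset.prod_nonneg fun i _ ↦ gaussianPDFReal_nonneg _ _ _),
    ← prod_gaussianPDFReal_zero_one]

lemma exists_integral_fun_norm_stdGaussian [Nonempty ι] :
    ∃ C : ℝ, ∀ g : ℝ → ℝ, ∫ x, g ‖x‖ ∂stdGaussian (EuclideanSpace ℝ ι) =
      C * ∫ r in Ioi 0, r ^ (Fintype.card ι - 1) * exp (-r ^ 2 / 2) * g r := by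
  refine ⟨Fintype.card ι * volume.real (Metric.ball (0 : EuclideanSpace ℝ ι) 1) *
    (√(2 * π))⁻¹ ^ Fintype.card ι, fun g ↦ ?_⟩
  rw [integral_stdGaussian_euclideanSpace, integral_fun_norm_addHaar volume
    fun r ↦ (√(2 * π))⁻¹ ^ Fintype.card ι * exp (-r ^ 2 / 2) * g r, finrank_euclideanSpace]
  simp only [nsmul_eq_mul, smul_eq_mul, ← integral_const_mul]
  congr 1 with r
  ring

lemma integral_fun_norm_stdGaussian [Nonempty ι] (g : ℝ → ℝ) :
    ∫ x, g ‖x‖ ∂stdGaussian (EuclideanSpace ℝ ι) =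
      (∫ r in Ioi 0, r ^ (Fintype.card ι - 1) * exp (-r ^ 2 / 2) * g r) /
        gaussianMomentIoi (Fintype.card ι - 1) := by
  obtain ⟨C, hC⟩ := exists_integral_fun_norm_stdGaussian (ι := ι)
  have hC1 : C * gaussianMomentIoi (Fintype.card ι - 1) = 1 := by
    simpa [gaussianMomentIoi] using (hC 1).symm
  rw [hC, eq_div_iff (gaussianMomentIoi_pos _).ne', mul_right_comm, hC1, one_mul]

lemma integral_norm_pow_stdGaussian {n : ℕ} (hn : Fintype.card ι = n + 1) (k : ℕ) :
    ∫ x, ‖x‖ ^ k ∂stdGaussian (EuclideanSpace ℝ ι) =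
      gaussianMomentIoi (n + k) / gaussianMomentIoi n := by
  have : Nonempty ι := Fintype.card_pos_iff.mp (by omega)
  rw [integral_fun_norm_stdGaussian fun r ↦ r ^ k, hn, Nat.add_sub_cancel, gaussianMomentIoi]
  congr 1
  refine setIntegral_congr_fun measurableSet_Ioi fun r _ ↦ ?_
  ring

theorem variance_norm_stdGaussian_le_one :
    Var[fun x ↦ ‖x‖; stdGaussian (EuclideanSpace ℝ ι)] ≤ 1 := by
  rcases isEmpty_or_nonempty ι with hι | _
  · have hzero : (fun x : EuclideanSpace ℝ ι ↦ ‖x‖) = 0 :=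
      funext fun x ↦ by simp [Subsingleton.elim x 0]
    rw [hzero, variance_zero]
    exact zero_le_one
  obtain ⟨n, hn⟩ : ∃ n, Fintype.card ι = n + 1 :=
    Nat.exists_eq_succ_of_ne_zero Fintype.card_ne_zero
  have hM := gaussianMomentIoi_pos n
  have hmoment_two : gaussianMomentIoi (n + 2) / gaussianMomentIoi n = n + 1 := by
    rw [gaussianMomentIoi_add_two, mul_div_assoc, div_self hM.ne', mul_one]
  have hmean_sq : (n : ℝ) ≤ (gaussianMomentIoi (n + 1) / gaussianMomentIoi n) ^ 2 := by
    rw [div_pow, le_div_iff₀ (by positivity)]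
    exact mul_gaussianMomentIoi_sq_le n
  have hmean := integral_norm_pow_stdGaussian hn 1
  simp only [pow_one] at hmean
  have hL2 : MemLp (fun x ↦ ‖x‖) 2 (stdGaussian (EuclideanSpace ℝ ι)) :=
    IsGaussian.memLp_two_id.norm
  rw [variance_eq_sub hL2]
  simp only [Pi.pow_apply]
  rw [integral_norm_pow_stdGaussian hn 2, hmean]
  linarith

lemma map_toLp_eq_stdGaussian {Ω : Type*} [MeasurableSpace Ω] {μ : Measure Ω}
    [IsProbabilityMeasure μ] {X : ι → Ω → ℝ} (hX : ∀ i, AEMeasurable (X i) μ)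
    (hindep : iIndepFun X μ) (hdist : ∀ i, μ.map (X i) = gaussianReal 0 1) :
    μ.map (fun ω ↦ WithLp.toLp 2 fun i ↦ X i ω) = stdGaussian (EuclideanSpace ℝ ι) := by
  have hpi : μ.map (fun ω i ↦ X i ω) = Measure.pi fun _ ↦ gaussianReal 0 1 := by
    rw [(iIndepFun_iff_map_fun_eq_pi_map hX).1 hindep]
    simp_rw [hdist]
  rw [← map_pi_eq_stdGaussian, ← hpi, AEMeasurable.map_map_of_aemeasurable (by fun_prop)
    (aemeasurable_pi_lambda _ hX)]
  rfl

end

theorem variance_norm_gaussian_le_one_general {Ω : Type*} [MeasurableSpace Ω]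
    (μ : Measure Ω) [IsProbabilityMeasure μ] (d : ℕ) (X : Fin d → Ω → ℝ)
    (hmeas : ∀ i, Measurable (X i))
    (hindep : iIndepFun X μ)
    (hdist : ∀ i, μ.map (X i) = gaussianReal 0 1) :
    variance (fun ω => Real.sqrt (∑ i, (X i ω) ^ 2)) μ ≤ 1 := by
  have hX : AEMeasurable (fun ω ↦ WithLp.toLp 2 fun i ↦ X i ω) μ := by fun_prop
  have hnorm : (fun ω ↦ √(∑ i, X i ω ^ 2)) =
      (fun x : EuclideanSpace ℝ (Fin d) ↦ ‖x‖) ∘ fun ω ↦ WithLp.toLp 2 fun i ↦ X i ω := by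
    funext ω
    simp [EuclideanSpace.norm_eq]
  rw [hnorm, ← variance_map (by fun_prop) hX,
    map_toLp_eq_stdGaussian (fun i ↦ (hmeas i).aemeasurable) hindep hdist]
  exact variance_norm_stdGaussian_le_one

theorem variance_norm_gaussian_le_one {Ω : Type*} [MeasurableSpace Ω]
    (μ : Measure Ω) [IsProbabilityMeasure μ] (d : ℕ) (hd : 1 ≤ d) (X : Fin d → Ω → ℝ)
    (hmeas : ∀ i, Measurable (X i))
    (hindep : iIndepFun X μ)
    (hdist : ∀ i, μ.map (X i) = gaussianReal 0 1) :
    variance (fun ω => Real.sqrt (∑ i, (X i ω) ^ 2)) μ ≤ 1 :=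
  variance_norm_gaussian_le_one_general μ d X hmeas hindep hdist
end

section
/- (Waist Concentration Theorem) For d ≥ 3 and ε > 0, λ^d(W_ε) ≥ (1 - (2/(ε√(d-1)))·exp(-ε²(d-1)/2))·λ^d(B̄₁(0)), where W_ε = {x ∈ B̄₁(0) : |x₁| ≤ ε}. -/
open MeasureTheory Metric Set Real
open scoped ENNReal

/-!
The slice of the unit ball of `ℝⁿ⁺¹` at height `t` along a coordinate axis is an `n`-ball of
radius `√(1 - t²)`, so the slab `{x ∈ B | x i ∈ s}` has volume `∫ₛ (1 - t²)^(n/2) dt · vol Bⁿ`.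
The profile `(1 - t²)^(n/2)` is at most `exp (-n t²/2)`, whose tails beyond `±ε` have mass at most
`exp (-n ε²/2) / (n ε)`; by Bernoulli's inequality it is at least `1/√2` on `|t| ≤ 1/√(2n)`,
so its total mass is at least `1/√n`. Hence the caps `|x i| > ε` carry at most the fraction
`2 exp (-n ε²/2) / (ε √n)` of the volume of the ball.
-/

lemma sqrt_one_sub_sq_pow_le_exp (n : ℕ) (t : ℝ) :
    √(1 - t ^ 2) ^ n ≤ rexp (-(n / 2) * t ^ 2) := by
  have h : √(1 - t ^ 2) ≤ rexp (-t ^ 2 / 2) := by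
    rw [exp_half]
    exact Real.sqrt_le_sqrt (by linarith [add_one_le_exp (-t ^ 2)])
  calc √(1 - t ^ 2) ^ n ≤ rexp (-t ^ 2 / 2) ^ n := by gcongr
    _ = rexp (-(n / 2) * t ^ 2) := by rw [← exp_nat_mul]; ring_nf

lemma integral_Ioi_mul_exp_neg_mul_sq {b : ℝ} (hb : 0 < b) (a : ℝ) :
    ∫ t in Ioi a, t * rexp (-b * t ^ 2) = rexp (-b * a ^ 2) / (2 * b) := by
  have hderiv (t : ℝ) : HasDerivAt (fun t => -rexp (-b * t ^ 2) / (2 * b))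
      (t * rexp (-b * t ^ 2)) t := by
    refine ((((hasDerivAt_pow 2 t).const_mul (-b)).exp.neg).div_const (2 * b)).congr_deriv ?_
    field_simp
    ring
  have hlim : Filter.Tendsto (fun t => -rexp (-b * t ^ 2) / (2 * b)) Filter.atTop (nhds 0) := by
    simpa using (tendsto_exp_atBot.comp <| (Filter.tendsto_pow_atTop two_ne_zero)
      |>.const_mul_atTop_of_neg (neg_neg_iff_pos.mpr hb)).neg.div_const (2 * b)
  rw [integral_Ioi_of_hasDerivAt_of_tendsto' (fun t _ => hderiv t)
    (integrable_mul_exp_neg_mul_sq hb).integrableOn hlim]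
  ring

lemma lintegral_Ioi_exp_neg_mul_sq_le {a b : ℝ} (ha : 0 < a) (hb : 0 < b) :
    ∫⁻ t in Ioi a, ENNReal.ofReal (rexp (-b * t ^ 2))
      ≤ ENNReal.ofReal (rexp (-b * a ^ 2) / (2 * b * a)) := by
  have hint : IntegrableOn (fun t => t * rexp (-b * t ^ 2) / a) (Ioi a) :=
    ((integrable_mul_exp_neg_mul_sq hb).div_const a).integrableOn
  calc ∫⁻ t in Ioi a, ENNReal.ofReal (rexp (-b * t ^ 2))
      ≤ ∫⁻ t in Ioi a, ENNReal.ofReal (t * rexp (-b * t ^ 2) / a) := by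
        refine setLIntegral_mono (by fun_prop) fun t (ht : a < t) => ENNReal.ofReal_le_ofReal ?_
        rw [le_div_iff₀ ha]
        nlinarith [exp_pos (-b * t ^ 2)]
    _ = ENNReal.ofReal (∫ t in Ioi a, t * rexp (-b * t ^ 2) / a) := by
        rw [ofReal_integral_eq_lintegral_ofReal hint]
        filter_upwards [ae_restrict_mem measurableSet_Ioi] with t (ht : a < t)
        have : 0 < t := ha.trans ht
        positivity
    _ = ENNReal.ofReal (rexp (-b * a ^ 2) / (2 * b * a)) := by
        rw [integral_div, integral_Ioi_mul_exp_neg_mul_sq hb, div_div]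

lemma lintegral_Iio_neg_eq_lintegral_Ioi {g : ℝ → ℝ≥0∞} (hg : ∀ t, g (-t) = g t) (a : ℝ) :
    ∫⁻ t in Iio (-a), g t = ∫⁻ t in Ioi a, g t := by
  rw [← lintegral_indicator measurableSet_Iio, ← lintegral_indicator measurableSet_Ioi,
    ← lintegral_neg_eq_self]
  congr 1 with t
  by_cases ht : a < t
  · simp [ht, hg]
  · simp [ht]

lemma lintegral_lt_abs_exp_neg_mul_sq_le {a b : ℝ} (ha : 0 < a) (hb : 0 < b) :
    ∫⁻ t in {t | a < |t|}, ENNReal.ofReal (rexp (-b * t ^ 2))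
      ≤ ENNReal.ofReal (rexp (-b * a ^ 2) / (b * a)) := by
  have hsplit : {t : ℝ | a < |t|} = Iio (-a) ∪ Ioi a := by
    ext t
    simp only [mem_ofPred_eq, mem_union, mem_Iio, mem_Ioi, lt_abs, lt_neg]
    tauto
  calc ∫⁻ t in {t | a < |t|}, ENNReal.ofReal (rexp (-b * t ^ 2))
      ≤ (∫⁻ t in Iio (-a), ENNReal.ofReal (rexp (-b * t ^ 2)))
          + ∫⁻ t in Ioi a, ENNReal.ofReal (rexp (-b * t ^ 2)) := by
        rw [hsplit]; exact lintegral_union_le _ _ _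
    _ = 2 * ∫⁻ t in Ioi a, ENNReal.ofReal (rexp (-b * t ^ 2)) := by
        rw [lintegral_Iio_neg_eq_lintegral_Ioi (fun t => by ring_nf), two_mul]
    _ ≤ 2 * ENNReal.ofReal (rexp (-b * a ^ 2) / (2 * b * a)) := by
        gcongr; exact lintegral_Ioi_exp_neg_mul_sq_le ha hb
    _ = ENNReal.ofReal (rexp (-b * a ^ 2) / (b * a)) := by
        rw [← ENNReal.ofReal_ofNat, ← ENNReal.ofReal_mul zero_le_two]
        congr 1
        field_simp

lemma inv_sqrt_le_lintegral_sqrt_one_sub_sq_pow {n : ℕ} (hn : n ≠ 0) :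
    ENNReal.ofReal (√n)⁻¹ ≤ ∫⁻ t, ENNReal.ofReal (√(1 - t ^ 2) ^ n) := by
  have hn' : (1 : ℝ) ≤ n := by exact_mod_cast Nat.one_le_iff_ne_zero.mpr hn
  set a : ℝ := (√2)⁻¹ * (√n)⁻¹
  have ha_sq : a ^ 2 = 1 / (2 * n) := by
    simp only [a, mul_pow, inv_pow, sq_sqrt zero_le_two, sq_sqrt (Nat.cast_nonneg n)]
    ring
  have hprofile (t : ℝ) (ht : t ∈ Icc (-a) a) : (√2)⁻¹ ≤ √(1 - t ^ 2) ^ n := by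
    have ht_sq : t ^ 2 ≤ a ^ 2 := sq_le_sq' ht.1 ht.2
    have ha_le : a ^ 2 ≤ 1 := by
      rw [ha_sq, div_le_one (by positivity)]; linarith
    have hnt : (n : ℝ) * t ^ 2 ≤ 1 / 2 := by
      calc (n : ℝ) * t ^ 2 ≤ n * a ^ 2 := by gcongr
        _ = 1 / 2 := by rw [ha_sq]; field_simp
    have hbern : 1 / 2 ≤ (1 - t ^ 2) ^ n :=
      calc 1 / 2 ≤ 1 + n * -t ^ 2 := by linarith
        _ ≤ (1 + -t ^ 2) ^ n := one_add_mul_le_pow (by linarith) n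
        _ = (1 - t ^ 2) ^ n := by ring
    rw [← pow_le_pow_iff_left₀ (by positivity) (by positivity) two_ne_zero, ← pow_mul,
      mul_comm, pow_mul, sq_sqrt (by linarith), inv_pow, sq_sqrt zero_le_two]
    linarith
  calc ENNReal.ofReal (√n)⁻¹ = ENNReal.ofReal (√2)⁻¹ * volume (Icc (-a) a) := by
        rw [volume_Icc, ← ENNReal.ofReal_mul (by positivity)]
        congr 1
        have : √2 ≠ 0 := by positivity
        simp only [a]
        field_simp
        rw [sq_sqrt zero_le_two]
        ring
    _ = ∫⁻ _ in Icc (-a) a, ENNReal.ofReal (√2)⁻¹ := (setLIntegral_const _ _).symm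
    _ ≤ ∫⁻ t in Icc (-a) a, ENNReal.ofReal (√(1 - t ^ 2) ^ n) :=
        setLIntegral_mono (by fun_prop) fun t ht => ENNReal.ofReal_le_ofReal (hprofile t ht)
    _ ≤ ∫⁻ t, ENNReal.ofReal (√(1 - t ^ 2) ^ n) := setLIntegral_le_lintegral _ _

lemma lintegral_lt_abs_sqrt_one_sub_sq_pow_le {n : ℕ} (hn : n ≠ 0) {ε : ℝ} (hε : 0 < ε) :
    ∫⁻ t in {t | ε < |t|}, ENNReal.ofReal (√(1 - t ^ 2) ^ n)
      ≤ ENNReal.ofReal (2 / (ε * √n) * rexp (-(ε ^ 2 * n / 2)))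
        * ∫⁻ t, ENNReal.ofReal (√(1 - t ^ 2) ^ n) := by
  have hn_pos : (0 : ℝ) < n := by exact_mod_cast Nat.pos_of_ne_zero hn
  calc ∫⁻ t in {t | ε < |t|}, ENNReal.ofReal (√(1 - t ^ 2) ^ n)
      ≤ ∫⁻ t in {t | ε < |t|}, ENNReal.ofReal (rexp (-(n / 2) * t ^ 2)) :=
        lintegral_mono fun t => ENNReal.ofReal_le_ofReal (sqrt_one_sub_sq_pow_le_exp n t)
    _ ≤ ENNReal.ofReal (rexp (-(n / 2) * ε ^ 2) / (n / 2 * ε)) :=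
        lintegral_lt_abs_exp_neg_mul_sq_le hε (by positivity)
    _ = ENNReal.ofReal (2 / (ε * √n) * rexp (-(ε ^ 2 * n / 2))) * ENNReal.ofReal (√n)⁻¹ := by
        rw [← ENNReal.ofReal_mul (by positivity)]
        congr 1
        have hsqrt : √n * √n = n := mul_self_sqrt hn_pos.le
        rw [show -(n / 2) * ε ^ 2 = -(ε ^ 2 * n / 2) by ring]
        field_simp
        rw [sq_sqrt hn_pos.le]
    _ ≤ _ := by gcongr; exact inv_sqrt_le_lintegral_sqrt_one_sub_sq_pow hn

lemma volume_setOf_sum_sq_le {n : ℕ} (hn : n ≠ 0) (c : ℝ) :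
    volume {y : Fin n → ℝ | ∑ i, y i ^ 2 ≤ c}
      = ENNReal.ofReal (√c ^ n) * volume (ball (0 : EuclideanSpace ℝ (Fin n)) 1) := by
  have hmeas : MeasurableSet {y : Fin n → ℝ | ∑ i, y i ^ 2 ≤ c} :=
    measurableSet_le (by fun_prop) measurable_const
  rw [← (EuclideanSpace.volume_preserving_symm_measurableEquiv_toLp (Fin n)).measure_preimage
    hmeas.nullMeasurableSet]
  rcases le_or_gt 0 c with hc | hc
  · have hball : (MeasurableEquiv.toLp 2 (Fin n → ℝ)).symm ⁻¹' {y | ∑ i, y i ^ 2 ≤ c}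
        = closedBall 0 √c := by
      ext x
      simp only [mem_preimage, mem_ofPred_eq, mem_closedBall, dist_zero_right,
        le_sqrt (norm_nonneg x) hc, EuclideanSpace.norm_sq_eq, Real.norm_eq_abs, sq_abs]
      rfl
    rw [hball, Measure.addHaar_closedBall _ _ (sqrt_nonneg c), finrank_euclideanSpace_fin]
  · have hempty : (MeasurableEquiv.toLp 2 (Fin n → ℝ)).symm ⁻¹' {y | ∑ i, y i ^ 2 ≤ c} = ∅ :=
      eq_empty_of_forall_notMem fun x (hx : ∑ i, x i ^ 2 ≤ c) =>
        hc.not_ge (le_trans (by positivity) hx)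
    rw [hempty, sqrt_eq_zero_of_nonpos hc.le, zero_pow hn, measure_empty, ENNReal.ofReal_zero,
      zero_mul]

lemma volume_setOf_fst_mem_sq_add_sum_sq_le {n : ℕ} (hn : n ≠ 0) {s : Set ℝ}
    (hs : MeasurableSet s) :
    volume {p : ℝ × (Fin n → ℝ) | p.1 ∈ s ∧ p.1 ^ 2 + ∑ j, p.2 j ^ 2 ≤ 1}
      = (∫⁻ t in s, ENNReal.ofReal (√(1 - t ^ 2) ^ n))
        * volume (ball (0 : EuclideanSpace ℝ (Fin n)) 1) := by
  set T : Set (ℝ × (Fin n → ℝ)) := {p | p.1 ∈ s ∧ p.1 ^ 2 + ∑ j, p.2 j ^ 2 ≤ 1} with hT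
  have hmeas : MeasurableSet T :=
    (hs.preimage measurable_fst).inter <| measurableSet_le
      (measurable_fst.pow_const 2 |>.add <| Finset.measurable_sum _ fun j _ => by fun_prop)
      measurable_const
  have hfiber (t : ℝ) :
      volume (Prod.mk t ⁻¹' T)
        = s.indicator (fun t => ENNReal.ofReal (√(1 - t ^ 2) ^ n)
            * volume (ball (0 : EuclideanSpace ℝ (Fin n)) 1)) t := by
    by_cases ht : t ∈ s
    · have hslice : Prod.mk t ⁻¹' T = {y | ∑ j, y j ^ 2 ≤ 1 - t ^ 2} := by
        ext y
        simp only [hT, mem_preimage, mem_ofPred_eq, ht, true_and]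
        constructor <;> intro h <;> linarith
      rw [hslice, volume_setOf_sum_sq_le hn, indicator_of_mem ht]
    · simp [hT, ht]
  rw [Measure.volume_eq_prod, Measure.prod_apply hmeas, lintegral_congr hfiber,
    lintegral_indicator hs, lintegral_mul_const _ (by fun_prop)]

lemma volume_closedBall_inter_coord_mem {n : ℕ} (hn : n ≠ 0) (i : Fin (n + 1)) {s : Set ℝ}
    (hs : MeasurableSet s) :
    volume {x : EuclideanSpace ℝ (Fin (n + 1)) | x ∈ closedBall 0 1 ∧ x i ∈ s}
      = (∫⁻ t in s, ENNReal.ofReal (√(1 - t ^ 2) ^ n))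
        * volume (ball (0 : EuclideanSpace ℝ (Fin n)) 1) := by
  let e := (MeasurableEquiv.toLp 2 (Fin (n + 1) → ℝ)).symm.trans
    (MeasurableEquiv.piFinSuccAbove (fun _ => ℝ) i)
  have he : MeasurePreserving e volume volume :=
    (measurePreserving_piFinSuccAbove (fun _ => volume) i).comp
      (EuclideanSpace.volume_preserving_symm_measurableEquiv_toLp (Fin (n + 1)))
  have hpre : {x : EuclideanSpace ℝ (Fin (n + 1)) | x ∈ closedBall 0 1 ∧ x i ∈ s}
      = e ⁻¹' {p : ℝ × (Fin n → ℝ) | p.1 ∈ s ∧ p.1 ^ 2 + ∑ j, p.2 j ^ 2 ≤ 1} := by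
    ext x
    have hnorm : ‖x‖ ^ 2 = x i ^ 2 + ∑ j : Fin n, x (i.succAbove j) ^ 2 := by
      simp only [EuclideanSpace.norm_sq_eq, Real.norm_eq_abs, sq_abs]
      exact Fin.sum_univ_succAbove (fun j => x j ^ 2) i
    simp only [e, mem_ofPred_eq, mem_preimage, MeasurableEquiv.trans_apply, mem_closedBall,
      dist_zero_right, MeasurableEquiv.piFinSuccAbove_apply, ← sq_le_one_iff₀ (norm_nonneg x), hnorm]
    exact and_comm
  rw [hpre, he.measure_preimage_equiv, volume_setOf_fst_mem_sq_add_sum_sq_le hn hs]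

lemma ofReal_one_sub_mul_measure_le {α : Type*} [MeasurableSpace α] {μ : Measure α}
    {s t : Set α} {c : ℝ} (hc : 0 ≤ c) (ht : μ t ≠ ∞) (h : μ (t \ s) ≤ ENNReal.ofReal c * μ t) :
    ENNReal.ofReal (1 - c) * μ t ≤ μ s :=
  calc ENNReal.ofReal (1 - c) * μ t = μ t - ENNReal.ofReal c * μ t := by
        rw [ENNReal.ofReal_sub _ hc, ENNReal.ofReal_one, ENNReal.sub_mul fun _ _ => ht, one_mul]
    _ ≤ μ t - μ (t \ s) := tsub_le_tsub_left h _
    _ ≤ μ s := tsub_le_iff_right.mpr <| (measure_mono (by simp)).trans (measure_union_le s (t \ s))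

theorem waist_concentration (d : ℕ) (hd : 3 ≤ d) (ε : ℝ) (hε : 0 < ε) :
    volume {x : EuclideanSpace ℝ (Fin d) |
        x ∈ closedBall 0 1 ∧ |x ⟨0, by omega⟩| ≤ ε}
      ≥ ENNReal.ofReal
          (1 - 2 / (ε * Real.sqrt (d - 1)) * Real.exp (-(ε ^ 2 * (d - 1) / 2))) *
        volume (closedBall (0 : EuclideanSpace ℝ (Fin d)) 1) := by
  obtain ⟨n, rfl⟩ : ∃ n, d = n + 1 := ⟨d - 1, by omega⟩
  have hn : n ≠ 0 := by omega
  rw [show ((n + 1 : ℕ) : ℝ) - 1 = n by push_cast; ring, ge_iff_le]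
  refine ofReal_one_sub_mul_measure_le (by positivity) measure_closedBall_lt_top.ne ?_
  set i : Fin (n + 1) := ⟨0, by omega⟩
  have hcap :
      closedBall 0 1 \ {x : EuclideanSpace ℝ (Fin (n + 1)) | x ∈ closedBall 0 1 ∧ |x i| ≤ ε} =
        {x | x ∈ closedBall 0 1 ∧ x i ∈ {t | ε < |t|}} := by
    ext x
    simp only [mem_sdiff, mem_ofPred_eq, not_and, not_le]
    tauto
  have hball := volume_closedBall_inter_coord_mem hn i MeasurableSet.univ
  simp only [mem_univ, and_true, ofPred_mem_eq, Measure.restrict_univ] at hball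
  rw [hcap, hball, volume_closedBall_inter_coord_mem hn i
    (measurableSet_lt measurable_const measurable_abs), ← mul_assoc]
  gcongr
  exact lintegral_lt_abs_sqrt_one_sub_sq_pow_le hn hε
end

section
/- Let d ≥ 3, n ≥ 2, and let x⁽¹⁾,...,x⁽ⁿ⁾ be independent points drawn uniformly at random from the closed unit ball B̄₁(0) ⊆ ℝ^d. Then P[‖x⁽ʲ⁾‖ ≥ 1 - (2 ln n)/d for all j = 1,...,n] ≥ 1 - 1/n. -/
/-!
Only the marginals matter: by the union bound, the probability that some `x⁽ʲ⁾` lies in the open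
ball of radius `r = 1 - 2 ln n / d` is at most `n · rᵈ`, and `rᵈ ≤ exp (-2 ln n) = 1 / n²`
because `1 - t ≤ exp (-t)`.
-/

open MeasureTheory ProbabilityTheory Metric ENNReal

theorem ENNReal.ofReal_one_sub_div_pow_le_exp_neg {d : ℕ} (hd : d ≠ 0) (t : ℝ) :
    ENNReal.ofReal (1 - t / d) ^ d ≤ ENNReal.ofReal (Real.exp (-t)) := by
  rcases le_or_gt t d with htd | htd
  · have h_nonneg : 0 ≤ 1 - t / d := by
      rw [sub_nonneg, div_le_one (by positivity)]
      exact htd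
    rw [← ENNReal.ofReal_pow h_nonneg]
    exact ENNReal.ofReal_le_ofReal (Real.one_sub_div_pow_le_exp_neg htd)
  · have h_nonpos : 1 - t / d ≤ 0 := by
      rw [sub_nonpos, one_le_div (by positivity)]
      exact htd.le
    rw [ENNReal.ofReal_of_nonpos h_nonpos, zero_pow hd]
    exact zero_le

theorem ENNReal.ofReal_exp_neg_two_mul_log {n : ℕ} (hn : n ≠ 0) :
    ENNReal.ofReal (Real.exp (-(2 * Real.log n))) = ((n : ℝ≥0∞) ^ 2)⁻¹ := by
  have hn' : (0 : ℝ) < n := by positivity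
  rw [Real.exp_neg, show 2 * Real.log n = Real.log ((n : ℝ) ^ 2) by simp [Real.log_pow],
    Real.exp_log (by positivity),
    ENNReal.ofReal_inv_of_pos (by positivity), ENNReal.ofReal_pow hn'.le, ENNReal.ofReal_natCast]

section UnitBall

variable {E : Type*} [NormedAddCommGroup E] [NormedSpace ℝ E] [MeasurableSpace E]
  [FiniteDimensional ℝ E] (μ : Measure E) [μ.IsAddHaarMeasure]

theorem isProbabilityMeasure_cond_unitClosedBall :
    IsProbabilityMeasure (μ[|closedBall (0 : E) 1]) :=
  cond_isProbabilityMeasure_of_finite (measure_closedBall_pos μ 0 one_pos).ne'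
    measure_closedBall_lt_top.ne

theorem cond_unitClosedBall_ball_le [BorelSpace E] (r : ℝ) :
    μ[ball 0 r | closedBall (0 : E) 1] ≤ ENNReal.ofReal r ^ Module.finrank ℝ E := by
  rcases le_or_gt r 0 with hr | hr
  · simp [ball_eq_empty.mpr hr]
  have h_pos : μ (closedBall (0 : E) 1) ≠ 0 := (measure_closedBall_pos μ 0 one_pos).ne'
  have h_fin : μ (closedBall (0 : E) 1) ≠ ∞ := measure_closedBall_lt_top.ne
  calc μ[ball 0 r | closedBall (0 : E) 1]
      ≤ (μ (closedBall (0 : E) 1))⁻¹ * μ (ball 0 r) := by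
        rw [cond_apply measurableSet_closedBall]
        gcongr
        exact Set.inter_subset_right
    _ = ENNReal.ofReal r ^ Module.finrank ℝ E := by
        rw [Measure.addHaar_ball_of_pos μ 0 hr, ← Measure.addHaar_unitClosedBall_eq_addHaar_unitBall,
          mul_comm (ENNReal.ofReal _), ENNReal.inv_mul_cancel_left h_pos h_fin,
          ENNReal.ofReal_pow hr.le]

end UnitBall

theorem one_sub_sum_measure_compl_le_measure_iInter {Ω ι : Type*} [MeasurableSpace Ω] [Fintype ι]
    (μ : Measure Ω) [IsProbabilityMeasure μ] (s : ι → Set Ω) :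
    1 - ∑ i, μ (s i)ᶜ ≤ μ (⋂ i, s i) := by
  have h_cover : 1 ≤ μ (⋂ i, s i) + μ (⋃ i, (s i)ᶜ) := by
    rw [← Set.compl_iInter, ← measure_univ (μ := μ), ← Set.union_compl_self (⋂ i, s i)]
    exact measure_union_le _ _
  rw [tsub_le_iff_right]
  exact h_cover.trans (by gcongr; exact measure_iUnion_fintype_le μ _)

theorem uniform_ball_norm_close_to_one_general {Ω : Type*} [MeasurableSpace Ω]
    (μ : Measure Ω) [IsProbabilityMeasure μ] (d n : ℕ) (hd : 3 ≤ d)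
    (X : Fin n → Ω → EuclideanSpace ℝ (Fin d))
    (hdist : ∀ j, μ.map (X j)
      = ProbabilityTheory.cond volume (closedBall (0 : EuclideanSpace ℝ (Fin d)) 1)) :
    μ {ω | ∀ j, 1 - 2 * Real.log n / d ≤ ‖X j ω‖} ≥ 1 - 1 / n := by
  set r : ℝ := 1 - 2 * Real.log n / d
  have := isProbabilityMeasure_cond_unitClosedBall (volume : Measure (EuclideanSpace ℝ (Fin d)))
  have h_tail (j : Fin n) : μ {ω | r ≤ ‖X j ω‖}ᶜ ≤ ((n : ℝ≥0∞) ^ 2)⁻¹ := calc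
    μ {ω | r ≤ ‖X j ω‖}ᶜ = μ.map (X j) (ball 0 r) := by
      rw [Measure.map_apply_of_aemeasurable
        (.of_map_ne_zero (hdist j ▸ IsProbabilityMeasure.ne_zero _)) measurableSet_ball]
      congr 1
      ext ω
      simp
    _ ≤ ENNReal.ofReal r ^ d := by
      simpa [hdist j] using
        cond_unitClosedBall_ball_le (volume : Measure (EuclideanSpace ℝ (Fin d))) r
    _ ≤ ENNReal.ofReal (Real.exp (-(2 * Real.log n))) :=
      ENNReal.ofReal_one_sub_div_pow_le_exp_neg (by omega) _
    _ = ((n : ℝ≥0∞) ^ 2)⁻¹ := ENNReal.ofReal_exp_neg_two_mul_log (Fin.pos j).ne'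
  calc μ {ω | ∀ j, r ≤ ‖X j ω‖} = μ (⋂ j, {ω | r ≤ ‖X j ω‖}) := by rw [Set.ofPred_forall]
    _ ≥ 1 - ∑ j, μ {ω | r ≤ ‖X j ω‖}ᶜ := one_sub_sum_measure_compl_le_measure_iInter μ _
    _ ≥ 1 - ∑ _j : Fin n, ((n : ℝ≥0∞) ^ 2)⁻¹ := by gcongr with j; exact h_tail j
    _ ≥ 1 - 1 / n := by
      gcongr
      rw [Finset.sum_const, Finset.card_fin, nsmul_eq_mul, ENNReal.inv_pow, pow_two, ← mul_assoc,
        one_div]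
      exact mul_le_of_le_one_left (by positivity) (ENNReal.mul_inv_le_one _)

theorem uniform_ball_norm_close_to_one {Ω : Type*} [MeasurableSpace Ω]
    (μ : Measure Ω) [IsProbabilityMeasure μ] (d n : ℕ) (hd : 3 ≤ d) (hn : 2 ≤ n)
    (X : Fin n → Ω → EuclideanSpace ℝ (Fin d))
    (hmeas : ∀ j, Measurable (X j))
    (hindep : iIndepFun X μ)
    (hdist : ∀ j, μ.map (X j)
      = ProbabilityTheory.cond volume (closedBall (0 : EuclideanSpace ℝ (Fin d)) 1)) :
    μ {ω | ∀ j, 1 - 2 * Real.log n / d ≤ ‖X j ω‖} ≥ 1 - 1 / n :=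
  uniform_ball_norm_close_to_one_general μ d n hd X hdist
end

section
/- (Gaussian Annulus Theorem) Let X be a random vector in ℝ^d with independent standard normal coordinates. Then for every 0 ≤ ε ≤ √d, P[|‖X‖ - √d| ≥ ε] ≤ 2·exp(-ε²/16). -/
/-!
`‖X‖² = ∑ Xᵢ²` has moment generating function `(1 - 2t)^(-d/2) ≤ exp (d (t + 2t²))` for
`t ≤ 1/4`. Chernoff's bound at `t = ± ε / (4√d)` then gives
`P[‖X‖² ≥ d + ε√d] ≤ exp (-ε²/8)` and `P[‖X‖² ≤ d - ε√d] ≤ exp (-ε²/8)`, and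
`|‖X‖ - √d| ≥ ε` with `ε ≤ √d` forces `‖X‖²` into one of these two tails.
-/

open MeasureTheory ProbabilityTheory Real
open scoped NNReal

lemma mgf_sq_gaussianReal {v : ℝ≥0} {t : ℝ} (ht : 2 * v * t < 1) :
    mgf (· ^ 2) (gaussianReal 0 v) t = (√(1 - 2 * v * t))⁻¹ := by
  rcases eq_or_ne v 0 with rfl | hv
  · simp [mgf]
  have hb : 0 < 1 - 2 * v * t := by linarith
  have hpdf (x : ℝ) : gaussianPDFReal 0 v x • exp (t * x ^ 2)
      = (√(2 * π * v))⁻¹ * exp (-((1 - 2 * v * t) / (2 * v)) * x ^ 2) := by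
    rw [gaussianPDFReal, smul_eq_mul, mul_assoc, ← exp_add]
    field_simp
    ring_nf
  rw [mgf, integral_gaussianReal_eq_integral_smul hv]
  simp_rw [hpdf, integral_const_mul, integral_gaussian]
  rw [div_div_eq_mul_div, sqrt_div' _ hb.le, div_eq_mul_inv, ← mul_assoc,
    show π * (2 * v) = 2 * π * v by ring, inv_mul_cancel₀ (by positivity), one_mul]

lemma exp_neg_sub_sq_le_one_sub {u : ℝ} (hu : u ≤ 1 / 2) : exp (-u - u ^ 2) ≤ 1 - u := by
  rw [show -u - u ^ 2 = -(u + u ^ 2) by ring, exp_neg, inv_le_iff_one_le_mul₀ (exp_pos _)]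
  rcases le_total 0 u with hu0 | hu0
  · nlinarith [quadratic_le_exp_of_nonneg (show 0 ≤ u + u ^ 2 by positivity)]
  · nlinarith [add_one_le_exp (u + u ^ 2)]

lemma inv_sqrt_one_sub_two_mul_le_exp {t : ℝ} (ht : t ≤ 1 / 4) :
    (√(1 - 2 * t))⁻¹ ≤ exp (t + 2 * t ^ 2) := by
  have hsq : exp (-(t + 2 * t ^ 2)) ≤ √(1 - 2 * t) := by
    rw [le_sqrt (exp_pos _).le (by linarith), ← exp_nat_mul]
    convert exp_neg_sub_sq_le_one_sub (u := 2 * t) (by linarith) using 2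
    push_cast; ring
  simpa only [exp_neg, inv_inv] using inv_anti₀ (exp_pos _) hsq

lemma le_or_le_of_le_abs_sqrt_sub_sqrt {x y ε : ℝ} (hx : 0 ≤ x) (hy : 0 ≤ y) (hε : 0 ≤ ε)
    (hεy : ε ≤ √y) (h : ε ≤ |√x - √y|) : y + ε * √y ≤ x ∨ x ≤ y - ε * √y := by
  have hx' := sq_sqrt hx
  have hy' := sq_sqrt hy
  have hx0 := sqrt_nonneg x
  rcases le_abs'.mp h with h | h
  · right; nlinarith
  · left; nlinarith

section SumSq

variable {Ω ι : Type*} [MeasurableSpace Ω] {μ : Measure Ω} [Fintype ι]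
  {X : ι → Ω → ℝ} {t : ℝ}

lemma mgf_sum_sq_of_iIndepFun (hmeas : ∀ i, Measurable (X i)) (hindep : iIndepFun X μ)
    (hdist : ∀ i, μ.map (X i) = gaussianReal 0 1) (ht : 2 * t < 1) :
    mgf (fun ω ↦ ∑ i, X i ω ^ 2) μ t = (√(1 - 2 * t))⁻¹ ^ Fintype.card ι := by
  have hsq : iIndepFun (fun i ω ↦ X i ω ^ 2) μ := hindep.comp (fun _ x ↦ x ^ 2) (by fun_prop)
  have hsum : (fun ω ↦ ∑ i, X i ω ^ 2) = ∑ i, fun ω ↦ X i ω ^ 2 := by ext; simp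
  have hmgf (i : ι) : mgf (fun ω ↦ X i ω ^ 2) μ t = (√(1 - 2 * t))⁻¹ := by
    have h := mgf_sq_gaussianReal (v := 1) (t := t) (by simpa using ht)
    rwa [← hdist i, mgf_map (hmeas i).aemeasurable (by fun_prop), NNReal.coe_one, mul_one] at h
  rw [hsum, hsq.mgf_sum (by fun_prop)]
  simp [hmgf]

lemma integrable_exp_mul_sum_sq [IsProbabilityMeasure μ] (hmeas : ∀ i, Measurable (X i))
    (hindep : iIndepFun X μ) (hdist : ∀ i, μ.map (X i) = gaussianReal 0 1) (ht : 2 * t < 1) :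
    Integrable (fun ω ↦ exp (t * ∑ i, X i ω ^ 2)) μ := by
  rw [← mgf_pos_iff, mgf_sum_sq_of_iIndepFun hmeas hindep hdist ht]
  have : 0 < 1 - 2 * t := by linarith
  positivity

lemma mgf_sum_sq_le_exp (hmeas : ∀ i, Measurable (X i)) (hindep : iIndepFun X μ)
    (hdist : ∀ i, μ.map (X i) = gaussianReal 0 1) (ht : t ≤ 1 / 4) :
    mgf (fun ω ↦ ∑ i, X i ω ^ 2) μ t ≤ exp (Fintype.card ι * (t + 2 * t ^ 2)) := by
  rw [mgf_sum_sq_of_iIndepFun hmeas hindep hdist (by linarith), exp_nat_mul]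
  gcongr
  exact inv_sqrt_one_sub_two_mul_le_exp ht

end SumSq

section Chernoff

variable {Ω : Type*} [MeasurableSpace Ω] {μ : Measure Ω} [IsFiniteMeasure μ] {S : Ω → ℝ}
  {n a : ℝ}

-- The exponent of Chernoff's bound at the optimal `t = a / (4 n)`.
lemma neg_mul_add_mul_eq_neg_div (n a : ℝ) :
    -(a / (4 * n)) * a + n * (2 * (a / (4 * n)) ^ 2) = -(a ^ 2 / (8 * n)) := by
  rcases eq_or_ne n 0 with rfl | hn
  · simp
  field_simp
  ring

lemma measureReal_add_le_le_exp_of_mgf_le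
    (hint : ∀ t ≤ 1 / 4, Integrable (fun ω ↦ exp (t * S ω)) μ)
    (hmgf : ∀ t ≤ 1 / 4, mgf S μ t ≤ exp (n * (t + 2 * t ^ 2))) (ha : 0 ≤ a) (han : a ≤ n) :
    μ.real {ω | n + a ≤ S ω} ≤ exp (-(a ^ 2 / (8 * n))) := by
  have hn : 0 ≤ n := ha.trans han
  have ht0 : 0 ≤ a / (4 * n) := by positivity
  have ht : a / (4 * n) ≤ 1 / 4 := div_le_of_le_mul₀ (by linarith) (by norm_num) (by linarith)
  calc μ.real {ω | n + a ≤ S ω}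
      ≤ exp (-(a / (4 * n)) * (n + a)) * mgf S μ (a / (4 * n)) :=
        measure_ge_le_exp_mul_mgf _ ht0 (hint _ ht)
    _ ≤ exp (-(a / (4 * n)) * (n + a)) * exp (n * (a / (4 * n) + 2 * (a / (4 * n)) ^ 2)) := by
        gcongr; exact hmgf _ ht
    _ = exp (-(a ^ 2 / (8 * n))) := by
        rw [← exp_add, ← neg_mul_add_mul_eq_neg_div]
        ring_nf

lemma measureReal_le_sub_le_exp_of_mgf_le
    (hint : ∀ t ≤ 1 / 4, Integrable (fun ω ↦ exp (t * S ω)) μ)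
    (hmgf : ∀ t ≤ 1 / 4, mgf S μ t ≤ exp (n * (t + 2 * t ^ 2))) (hn : 0 ≤ n) (ha : 0 ≤ a) :
    μ.real {ω | S ω ≤ n - a} ≤ exp (-(a ^ 2 / (8 * n))) := by
  have ht0 : -(a / (4 * n)) ≤ 0 := neg_nonpos.mpr (by positivity)
  have ht : -(a / (4 * n)) ≤ 1 / 4 := by linarith
  calc μ.real {ω | S ω ≤ n - a}
      ≤ exp (a / (4 * n) * (n - a)) * mgf S μ (-(a / (4 * n))) := by
        simpa using measure_le_le_exp_mul_mgf (n - a) ht0 (hint _ ht)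
    _ ≤ exp (a / (4 * n) * (n - a)) * exp (n * (-(a / (4 * n)) + 2 * (-(a / (4 * n))) ^ 2)) := by
        gcongr; exact hmgf _ ht
    _ = exp (-(a ^ 2 / (8 * n))) := by
        rw [← exp_add, ← neg_mul_add_mul_eq_neg_div]
        ring_nf

end Chernoff

theorem gaussian_annulus {Ω : Type*} [MeasurableSpace Ω]
    (μ : Measure Ω) [IsProbabilityMeasure μ] (d : ℕ) (X : Fin d → Ω → ℝ)
    (hmeas : ∀ i, Measurable (X i))
    (hindep : iIndepFun X μ)
    (hdist : ∀ i, μ.map (X i) = gaussianReal 0 1)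
    (ε : ℝ) (hε0 : 0 ≤ ε) (hε1 : ε ≤ Real.sqrt d) :
    μ {ω | ε ≤ |Real.sqrt (∑ i, (X i ω) ^ 2) - Real.sqrt d|}
      ≤ ENNReal.ofReal (2 * Real.exp (-(ε ^ 2) / 16)) := by
  have hint (t : ℝ) (ht : t ≤ 1 / 4) : Integrable (fun ω ↦ exp (t * ∑ i, X i ω ^ 2)) μ :=
    integrable_exp_mul_sum_sq hmeas hindep hdist (by linarith)
  have hmgf (t : ℝ) (ht : t ≤ 1 / 4) :
      mgf (fun ω ↦ ∑ i, X i ω ^ 2) μ t ≤ exp (d * (t + 2 * t ^ 2)) := by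
    simpa using mgf_sum_sq_le_exp hmeas hindep hdist ht
  have hεd : ε * √d ≤ d := by
    simpa [mul_self_sqrt (Nat.cast_nonneg d)] using mul_le_mul_of_nonneg_right hε1 (sqrt_nonneg d)
  have hexp : exp (-((ε * √d) ^ 2 / (8 * d))) ≤ exp (-(ε ^ 2) / 16) := by
    rcases Nat.eq_zero_or_pos d with rfl | hd
    · simp [le_antisymm (by simpa using hε1) hε0]
    rw [exp_le_exp, mul_pow, sq_sqrt (Nat.cast_nonneg d), mul_div_mul_right _ _ (by positivity)]
    nlinarith [sq_nonneg ε]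
  have hsub : {ω | ε ≤ |√(∑ i, X i ω ^ 2) - √d|}
      ⊆ {ω | d + ε * √d ≤ ∑ i, X i ω ^ 2} ∪ {ω | ∑ i, X i ω ^ 2 ≤ d - ε * √d} :=
    fun ω hω ↦ le_or_le_of_le_abs_sqrt_sub_sqrt (by positivity) d.cast_nonneg hε0 hε1 hω
  rw [← ofReal_measureReal]
  gcongr
  calc μ.real {ω | ε ≤ |√(∑ i, X i ω ^ 2) - √d|}
      ≤ μ.real {ω | d + ε * √d ≤ ∑ i, X i ω ^ 2} + μ.real {ω | ∑ i, X i ω ^ 2 ≤ d - ε * √d} :=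
        (measureReal_mono hsub).trans (measureReal_union_le _ _)
    _ ≤ exp (-((ε * √d) ^ 2 / (8 * d))) + exp (-((ε * √d) ^ 2 / (8 * d))) := by
        gcongr
        · exact measureReal_add_le_le_exp_of_mgf_le hint hmgf (by positivity) hεd
        · exact measureReal_le_sub_le_exp_of_mgf_le hint hmgf d.cast_nonneg (by positivity)
    _ ≤ 2 * exp (-(ε ^ 2) / 16) := by linarith
end
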